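/- Let Δ : (ZMod 2)⁴ → (ZMod 2)⁴ be the linear map determined on the standard basis (e_C, e_H, e_I, e_G) by Δ(e_C) = e_H + e_I, Δ(e_H) = e_G, Δ(e_I) = e_G, Δ(e_G) = 0. Then Δ ∘ Δ = 0 and the kernel of Δ equals the range of Δ (so the homology of the chain complex ((ZMod 2)⁴, Δ) is trivial). -/
import Mathlib


/-- The connection matrix of the O(N) model RG flow, with fixed points
ordered as (C, H, I, G) = (Cubic, Wilson-Fisher, Ising, Gaussian),
squares to zero and has trivial homology: its kernel equals its range. -/
theorem ON_model_connection_matrix_trivial_homology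
    (Δ : (Fin 4 → ZMod 2) →ₗ[ZMod 2] (Fin 4 → ZMod 2))
    (hC : Δ (Pi.single 0 1) = Pi.single 1 1 + Pi.single 2 1)
    (hH : Δ (Pi.single 1 1) = Pi.single 3 1)
    (hI : Δ (Pi.single 2 1) = Pi.single 3 1)
    (hG : Δ (Pi.single 3 1) = 0) :
    Δ ∘ₗ Δ = 0 ∧ LinearMap.ker Δ = LinearMap.range Δ := by
  have hx : ∀ x : Fin 4 → ZMod 2,
      Δ x = x 0 • ((Pi.single 1 1 : Fin 4 → ZMod 2) + Pi.single 2 1) + (x 1 + x 2) • (Pi.single 3 1 : Fin 4 → ZMod 2) := by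
    intro x
    have hdecomp : x = x 0 • (Pi.single 0 1 : Fin 4 → ZMod 2)
        + x 1 • (Pi.single 1 1 : Fin 4 → ZMod 2)
        + x 2 • (Pi.single 2 1 : Fin 4 → ZMod 2)
        + x 3 • (Pi.single 3 1 : Fin 4 → ZMod 2) := by
      ext i; fin_cases i <;> simp [Pi.single_apply]
    conv_lhs => rw [hdecomp]
    simp only [map_add, map_smul, hC, hH, hI, hG, smul_zero, add_zero, add_smul]
    abel
  have hsq : Δ ∘ₗ Δ = 0 := by
    apply LinearMap.ext
    intro x
    rw [LinearMap.comp_apply, hx x, hx]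
    ext i
    fin_cases i <;> simp [Pi.single_apply] <;> ring_nf <;>
      rw [show (2:ZMod 2) = 0 from rfl, mul_zero]
  refine ⟨hsq, ?_⟩
  ext x
  constructor
  · intro hker
    have h0 : Δ x = 0 := hker
    rw [hx x] at h0
    have h1 : x 0 = 0 := by
      have := congrFun h0 1
      simpa [Pi.single_apply] using this
    have h3 : x 1 + x 2 = 0 := by
      have := congrFun h0 3
      simpa [Pi.single_apply] using this
    have h2 : x 2 = x 1 := by
      have h : x 2 = -(x 1) := by linear_combination h3
      rw [h, CharTwo.neg_eq]
    refine ⟨![x 1, x 3, 0, 0], ?_⟩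
    rw [hx]
    ext i
    fin_cases i <;> simp [Pi.single_apply, h1, h2]
  · rintro ⟨y, rfl⟩
    have : (Δ ∘ₗ Δ) y = 0 := by rw [hsq]; rfl
    simpa [LinearMap.mem_ker] using this
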